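/- Under the hypotheses: 0 ≤ l < k ≤ n, n ≥ 3, a ∈ Γ⁺ with σ_k(a) = σ_l(a) and m_{k,l}(a) > 2, let ψ(r,β) denote the unique smooth solution on [1,+∞) of ψ^k + ξ̄_k(a) r ψ^{k−1}ψ′ − ψ^l − ξ̲_l(a) r ψ^{l−1}ψ′ = 0 (r > 1), ψ(1) = β, for β ≥ 1. Then for each fixed r ≥ 1 the map β ↦ ψ(r,β) is continuous and strictly increasing on [1,+∞), and lim_{β→+∞} ψ(r,β) = +∞ for every r ≥ 1. -/

import Mathlib

open Finset Filter MeasureTheory Set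

noncomputable def esymm (n : ℕ) (k : ℤ) (a : Fin n → ℝ) : ℝ :=
  if 0 ≤ k then
    ∑ s ∈ Finset.powersetCard k.toNat (Finset.univ : Finset (Fin n)), ∏ i ∈ s, a i
  else 0

noncomputable def esymmDel (n : ℕ) (k : ℤ) (i : Fin n) (a : Fin n → ℝ) : ℝ :=
  if 0 ≤ k then
    ∑ s ∈ Finset.powersetCard k.toNat ((Finset.univ : Finset (Fin n)).erase i),
      ∏ j ∈ s, a j
  else 0

noncomputable def esymmDel2 (n : ℕ) (k : ℤ) (i j : Fin n) (a : Fin n → ℝ) : ℝ :=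
  if 0 ≤ k then
    ∑ s ∈ Finset.powersetCard k.toNat
        (((Finset.univ : Finset (Fin n)).erase i).erase j),
      ∏ t ∈ s, a t
  else 0

noncomputable def Xi (n : ℕ) (k : ℤ) (a x : Fin n → ℝ) : ℝ :=
  (∑ i, esymmDel n (k - 1) i a * a i ^ 2 * x i ^ 2) /
    (esymm n k a * ∑ i, a i * x i ^ 2)

noncomputable def xiSup (n : ℕ) (k : ℤ) (a : Fin n → ℝ) : ℝ :=
  sSup {y | ∃ x : Fin n → ℝ, x ≠ 0 ∧ Xi n k a x = y}

noncomputable def xiInf (n : ℕ) (k : ℤ) (a : Fin n → ℝ) : ℝ :=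
  sInf {y | ∃ x : Fin n → ℝ, x ≠ 0 ∧ Xi n k a x = y}

noncomputable def mkl (n : ℕ) (k l : ℤ) (a : Fin n → ℝ) : ℝ :=
  ((k : ℝ) - (l : ℝ)) / (xiSup n k a - xiInf n l a)

def GammaK (n : ℕ) (k : ℤ) : Set (Fin n → ℝ) :=
  {lam | ∀ j : ℤ, 1 ≤ j → j ≤ k → 0 < esymm n j lam}

noncomputable def hessian (n : ℕ) (f : (Fin n → ℝ) → ℝ) (x : Fin n → ℝ) :
    Matrix (Fin n) (Fin n) ℝ :=
  fun i j => fderiv ℝ (fun y => fderiv ℝ f y (Pi.single j 1)) x (Pi.single i 1)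

def IsViscSubsol (n : ℕ) (k l : ℤ) (Ω : Set (Fin n → ℝ)) (u : (Fin n → ℝ) → ℝ) : Prop :=
  ∀ v : (Fin n → ℝ) → ℝ, ContDiffOn ℝ 2 v Ω →
    ∀ x₀ ∈ Ω, (∀ x ∈ Ω, u x ≤ v x) → v x₀ = u x₀ →
      ∀ hH : (hessian n v x₀).IsHermitian,
        esymm n l hH.eigenvalues ≤ esymm n k hH.eigenvalues

def IsViscSupersol (n : ℕ) (k l : ℤ) (Ω : Set (Fin n → ℝ)) (u : (Fin n → ℝ) → ℝ) : Prop :=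
  ∀ v : (Fin n → ℝ) → ℝ, ContDiffOn ℝ 2 v Ω →
    (∀ x ∈ Ω, ∀ hH : (hessian n v x).IsHermitian,
      hH.eigenvalues ∈ closure (GammaK n k)) →
    ∀ x₀ ∈ Ω, (∀ x ∈ Ω, v x ≤ u x) → v x₀ = u x₀ →
      ∀ hH : (hessian n v x₀).IsHermitian,
        esymm n k hH.eigenvalues ≤ esymm n l hH.eigenvalues

def IsViscSol (n : ℕ) (k l : ℤ) (Ω : Set (Fin n → ℝ)) (u : (Fin n → ℝ) → ℝ) : Prop :=
  IsViscSubsol n k l Ω u ∧ IsViscSupersol n k l Ω u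

def SolvesODE (n : ℕ) (k l : ℤ) (a : Fin n → ℝ) (β : ℝ) (ψ : ℝ → ℝ) : Prop :=
  ContDiffOn ℝ (⊤ : ℕ∞) ψ (Set.Ici 1) ∧ ψ 1 = β ∧
  ∀ r : ℝ, 1 < r →
    ψ r ^ k + xiSup n k a * r * ψ r ^ (k - 1) * deriv ψ r
      - ψ r ^ l - xiInf n l a * r * ψ r ^ (l - 1) * deriv ψ r = 0


section Algebra

variable {n : ℕ} {a : Fin n → ℝ}

lemma sum_powersetCard_pos (ha : ∀ i, 0 < a i) {m : ℕ} {S : Finset (Fin n)} (hm : m ≤ S.card) :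
    0 < ∑ s ∈ Finset.powersetCard m S, ∏ i ∈ s, a i := by
  apply Finset.sum_pos
  · intro s _hs
    exact Finset.prod_pos fun i _ => ha i
  · exact Finset.powersetCard_nonempty.2 hm

lemma esymm_pos (ha : ∀ i, 0 < a i) {k : ℤ} (hk : 0 ≤ k) (hkn : k ≤ (n : ℤ)) :
    0 < esymm n k a := by
  rw [esymm, if_pos hk]
  exact sum_powersetCard_pos ha (by simpa using Int.toNat_le.2 hkn)

lemma esymmDel_nonneg (ha : ∀ i, 0 < a i) {k : ℤ} {i : Fin n} : 0 ≤ esymmDel n k i a := by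
  rw [esymmDel]
  split
  · exact Finset.sum_nonneg fun s _ => Finset.prod_nonneg fun j _ => (ha j).le
  · exact le_refl _

lemma esymmDel_pos (ha : ∀ i, 0 < a i) {k : ℤ} {i : Fin n} (hk : 0 ≤ k)
    (hkn : k ≤ (n : ℤ) - 1) : 0 < esymmDel n k i a := by
  rw [esymmDel, if_pos hk]
  apply sum_powersetCard_pos ha
  rw [Finset.card_erase_of_mem (Finset.mem_univ i)]
  simp only [Finset.card_univ, Fintype.card_fin]
  omega

lemma sum_mul_single_sq (f : Fin n → ℝ) (j : Fin n) :
    ∑ i, f i * ((Pi.single j (1:ℝ) : Fin n → ℝ) i) ^ 2 = f j := by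
  rw [Finset.sum_eq_single j]
  · simp
  · intro i _ hij
    simp [Pi.single_apply, hij]
  · simp

lemma single_ne_zero' (j : Fin n) : (Pi.single j (1:ℝ) : Fin n → ℝ) ≠ 0 := by
  intro h
  have := congrFun h j
  simp at this

lemma Xi_single (k : ℤ) (j : Fin n) :
    Xi n k a (Pi.single j 1) =
      (esymmDel n (k-1) j a * a j ^ 2) / (esymm n k a * a j) := by
  rw [Xi]
  congr 1
  · have := sum_mul_single_sq (fun i => esymmDel n (k-1) i a * a i ^ 2) j
    simpa [mul_assoc] using this
  · congr 1
    have := sum_mul_single_sq (fun i => a i) j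
    simpa using this

end Algebra

section SupInf

variable {n : ℕ} {a : Fin n → ℝ} {k l : ℤ}

lemma xiSet_nonempty (hn : 0 < n) (k : ℤ) :
    {y | ∃ x : Fin n → ℝ, x ≠ 0 ∧ Xi n k a x = y}.Nonempty :=
  ⟨_, Pi.single ⟨0, hn⟩ 1, single_ne_zero' _, rfl⟩

lemma sum_ax_pos (ha : ∀ i, 0 < a i) {x : Fin n → ℝ} (hx : x ≠ 0) :
    0 < ∑ i, a i * x i ^ 2 := by
  obtain ⟨i₀, hi₀⟩ := Function.ne_iff.1 hx
  apply Finset.sum_pos' (fun i _ => mul_nonneg (ha i).le (sq_nonneg _))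
  exact ⟨i₀, Finset.mem_univ _, mul_pos (ha i₀) (pow_two_pos_of_ne_zero hi₀)⟩

lemma xiSet_bddAbove (ha : ∀ i, 0 < a i) (hk : 0 ≤ k) (hkn : k ≤ (n : ℤ)) :
    BddAbove {y | ∃ x : Fin n → ℝ, x ≠ 0 ∧ Xi n k a x = y} := by
  set M := ∑ i, esymmDel n (k-1) i a * a i with hM
  have hMn : ∀ j : Fin n, esymmDel n (k-1) j a * a j ≤ M := by
    intro j
    apply Finset.single_le_sum (f := fun i => esymmDel n (k-1) i a * a i)
      (fun i _ => mul_nonneg (esymmDel_nonneg ha) (ha i).le) (Finset.mem_univ j)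
  refine ⟨M / esymm n k a, ?_⟩
  rintro y ⟨x, hx, rfl⟩
  have hT : 0 < ∑ i, a i * x i ^ 2 := sum_ax_pos ha hx
  have hσ : 0 < esymm n k a := esymm_pos ha hk hkn
  have hN : (∑ i, esymmDel n (k-1) i a * a i ^ 2 * x i ^ 2) ≤ M * ∑ i, a i * x i ^ 2 := by
    rw [Finset.mul_sum]
    apply Finset.sum_le_sum
    intro i _
    have h1 : esymmDel n (k-1) i a * a i ^ 2 * x i ^ 2
        = (esymmDel n (k-1) i a * a i) * (a i * x i ^ 2) := by ring
    have h2 : (esymmDel n (k-1) i a * a i) * (a i * x i ^ 2) ≤ M * (a i * x i ^ 2) :=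
      mul_le_mul_of_nonneg_right (hMn i) (mul_nonneg (ha i).le (sq_nonneg _))
    linarith
  rw [Xi, div_le_div_iff₀ (mul_pos hσ hT) hσ]
  nlinarith [hσ.le, hT.le]

lemma xiInf_nonneg (ha : ∀ i, 0 < a i) (hn : 0 < n) (hl : 0 ≤ l) (hln : l ≤ (n : ℤ)) :
    0 ≤ xiInf n l a := by
  apply le_csInf (xiSet_nonempty hn l)
  rintro y ⟨x, hx, rfl⟩
  rw [Xi]
  apply div_nonneg
  · exact Finset.sum_nonneg fun i _ => by
      have := esymmDel_nonneg (k := l - 1) (i := i) ha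
      positivity
  · have := (esymm_pos ha hl hln).le
    have := (sum_ax_pos ha hx).le
    positivity

lemma xiSup_pos (ha : ∀ i, 0 < a i) (hn : 0 < n) (hk : 1 ≤ k) (hkn : k ≤ (n : ℤ)) :
    0 < xiSup n k a := by
  set j : Fin n := ⟨0, hn⟩
  have hv : Xi n k a (Pi.single j 1) ∈
      {y | ∃ x : Fin n → ℝ, x ≠ 0 ∧ Xi n k a x = y} := ⟨_, single_ne_zero' _, rfl⟩
  have h1 : Xi n k a (Pi.single j 1) ≤ xiSup n k a :=
    le_csSup (xiSet_bddAbove ha (by omega) hkn) hv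
  have h2 : 0 < Xi n k a (Pi.single j 1) := by
    rw [Xi_single]
    have h3 : 0 < esymmDel n (k-1) j a := esymmDel_pos ha (by omega) (by omega)
    have h4 : 0 < esymm n k a := esymm_pos ha (by omega) hkn
    have := ha j
    positivity
  linarith

lemma xiSup_sub_xiInf_pos (hlk : l < k) (hm : 2 < mkl n k l a) :
    0 < xiSup n k a - xiInf n l a := by
  by_contra h
  push_neg at h
  have hkl : (0:ℝ) ≤ (k:ℝ) - (l:ℝ) := by
    have : (l:ℝ) ≤ (k:ℝ) := by exact_mod_cast hlk.le
    linarith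
  have : mkl n k l a ≤ 0 := div_nonpos_iff.2 (Or.inl ⟨hkl, h⟩)
  linarith

end SupInf
noncomputable def gA (A B : ℝ) (k l : ℤ) (t : ℝ) : ℝ :=
  (A * t ^ (k-1) - B * t ^ (l-1)) / (t ^ k - t ^ l)

noncomputable def GA (A B : ℝ) (k l : ℤ) (t : ℝ) : ℝ :=
  -∫ s in (2:ℝ)..t, gA A B k l s

section Gfacts

variable {A B : ℝ} {k l : ℤ}

lemma denom_pos (hlk : l < k) {t : ℝ} (ht : 1 < t) : 0 < t ^ k - t ^ l :=
  sub_pos.2 (zpow_lt_zpow_right₀ ht hlk)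

lemma num_ge (hlk : l < k) (hA : 0 < A) {t : ℝ} (ht : 1 ≤ t) :
    (A - B) * t ^ (l-1) ≤ A * t ^ (k-1) - B * t ^ (l-1) := by
  have h1 : t ^ (l-1) ≤ t ^ (k-1) := zpow_le_zpow_right₀ ht (by omega)
  nlinarith [hA.le]

lemma g_pos (hlk : l < k) (hA : 0 < A) (hBA : B < A) {t : ℝ} (ht : 1 < t) :
    0 < gA A B k l t := by
  have h0 : (0:ℝ) < t := lt_trans one_pos ht
  have h1 := num_ge (B := B) hlk hA ht.le
  have h2 : (0:ℝ) < t ^ (l-1) := zpow_pos h0 _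
  have h3 : 0 < (A - B) * t ^ (l-1) := mul_pos (by linarith) h2
  exact div_pos (by linarith) (denom_pos hlk ht)

lemma g_contOn (hlk : l < k) : ContinuousOn (gA A B k l) (Set.Ioi 1) := by
  intro t ht
  have h0 : (t:ℝ) ≠ 0 := by have : (1:ℝ) < t := ht; positivity
  apply ContinuousAt.continuousWithinAt
  apply ContinuousAt.div
  · exact ((continuousAt_const).mul (continuousAt_zpow₀ t (k-1) (Or.inl h0))).sub
      ((continuousAt_const).mul (continuousAt_zpow₀ t (l-1) (Or.inl h0)))
  · exact (continuousAt_zpow₀ t k (Or.inl h0)).sub (continuousAt_zpow₀ t l (Or.inl h0))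
  · exact (denom_pos hlk ht).ne'

lemma g_intble (hlk : l < k) {t : ℝ} (ht : 1 < t) :
    IntervalIntegrable (gA A B k l) volume 2 t := by
  apply ContinuousOn.intervalIntegrable
  apply (g_contOn hlk).mono
  intro s hs
  rcases hs with ⟨h1, _⟩
  have : (1:ℝ) < min 2 t := lt_min (by norm_num) ht
  exact lt_of_lt_of_le this h1

lemma G_hasDerivAt (hlk : l < k) {t : ℝ} (ht : 1 < t) :
    HasDerivAt (GA A B k l) (-(gA A B k l t)) t := by
  have h : HasDerivAt (fun u => ∫ s in (2:ℝ)..u, gA A B k l s) (gA A B k l t) t :=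
    intervalIntegral.integral_hasDerivAt_right (g_intble hlk ht)
    ((ContinuousOn.stronglyMeasurableAtFilter isOpen_Ioi (g_contOn hlk)) t ht)
    ((g_contOn hlk).continuousAt (isOpen_Ioi.mem_nhds ht))
  exact h.neg

lemma G_contOn (hlk : l < k) : ContinuousOn (GA A B k l) (Set.Ioi 1) :=
  fun t ht => (G_hasDerivAt hlk ht).continuousAt.continuousWithinAt

lemma G_anti (hlk : l < k) (hA : 0 < A) (hBA : B < A) :
    StrictAntiOn (GA A B k l) (Set.Ioi 1) := by
  apply strictAntiOn_of_deriv_neg (convex_Ioi 1) (G_contOn hlk)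
  intro x hx
  rw [interior_Ioi] at hx
  rw [(G_hasDerivAt hlk hx).deriv]
  exact neg_lt_zero.mpr (g_pos hlk hA hBA hx)

end Gfacts
section Gfacts2

variable {A B : ℝ} {k l : ℤ}

lemma g_lower_one (hl : 0 ≤ l) (hlk : l < k) (hA : 0 < A) (hBA : B < A) :
    ∃ c : ℝ, 0 < c ∧ ∀ t ∈ Set.Ioc (1:ℝ) 2, c / (t - 1) ≤ gA A B k l t := by
  set m : ℕ := (k - l).toNat with hm
  set L : ℕ := l.toNat with hL
  have hmz : (m : ℤ) = k - l := Int.toNat_of_nonneg (by omega)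
  have hLz : (L : ℤ) = l := Int.toNat_of_nonneg hl
  set D : ℝ := 2 ^ L * ((m : ℝ) * 2 ^ m) with hD
  have hm1 : 1 ≤ m := by omega
  have hDpos : 0 < D := by positivity
  refine ⟨(A - B) / 2 / D, div_pos (div_pos (by linarith) two_pos) hDpos, ?_⟩
  rintro t ⟨ht1, ht2⟩
  have ht0 : (0:ℝ) < t := lt_trans one_pos ht1
  -- numerator lower bound
  have hnum : (A - B) / 2 ≤ A * t ^ (k-1) - B * t ^ (l-1) := by
    have h1 := num_ge (B := B) hlk hA ht1.le
    have h2 : t ^ (-1 : ℤ) ≤ t ^ (l-1) := zpow_le_zpow_right₀ ht1.le (by omega)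
    have h3 : (2:ℝ)⁻¹ ≤ t⁻¹ := by
      apply inv_anti₀ ht0 ht2 |>.trans_eq rfl
    have h4 : (2:ℝ)⁻¹ ≤ t ^ (-1 : ℤ) := by
      rw [zpow_neg_one]; exact h3
    nlinarith [h2.trans_lt' (lt_of_lt_of_le (by norm_num : (0:ℝ) < 2⁻¹) h4)]
  -- denominator upper bound
  have hden : t ^ k - t ^ l ≤ D * (t - 1) := by
    have e1 : t ^ k = t ^ l * t ^ (k - l) := by
      rw [← zpow_add₀ ht0.ne']; ring_nf
    have e2 : t ^ (k - l) = t ^ m := by rw [← hmz, zpow_natCast]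
    have e3 : t ^ l = t ^ L := by rw [← hLz, zpow_natCast]
    have e4 : t ^ k - t ^ l = t ^ L * (t ^ m - 1) := by
      rw [e1, e2, e3]; ring
    have e5 : (t:ℝ) ^ m - 1 = (∑ i ∈ Finset.range m, t ^ i) * (t - 1) := (geom_sum_mul t m).symm
    have e6 : (∑ i ∈ Finset.range m, t ^ i) ≤ (m : ℝ) * 2 ^ m := by
      calc (∑ i ∈ Finset.range m, t ^ i) ≤ ∑ _i ∈ Finset.range m, (2:ℝ) ^ m := by
            apply Finset.sum_le_sum
            intro i hi
            calc t ^ i ≤ (2:ℝ) ^ i := pow_le_pow_left₀ ht0.le ht2 i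
              _ ≤ (2:ℝ) ^ m := pow_le_pow_right₀ (by norm_num) (Finset.mem_range.1 hi).le
        _ = (m : ℝ) * 2 ^ m := by
            rw [Finset.sum_const, Finset.card_range, nsmul_eq_mul]
    have e7 : (0:ℝ) < t ^ L := by positivity
    have e8 : t ^ L ≤ 2 ^ L := pow_le_pow_left₀ ht0.le ht2 L
    have e9 : (0:ℝ) ≤ t - 1 := by linarith
    have e10 : (0:ℝ) ≤ ∑ i ∈ Finset.range m, t ^ i :=
      Finset.sum_nonneg fun i _ => by positivity
    rw [e4, e5]
    calc t ^ L * ((∑ i ∈ Finset.range m, t ^ i) * (t - 1))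
        ≤ 2 ^ L * ((∑ i ∈ Finset.range m, t ^ i) * (t - 1)) := by
          apply mul_le_mul_of_nonneg_right e8 (by positivity)
      _ ≤ 2 ^ L * (((m : ℝ) * 2 ^ m) * (t - 1)) := by
          apply mul_le_mul_of_nonneg_left _ (by positivity)
          exact mul_le_mul_of_nonneg_right e6 e9
      _ = D * (t - 1) := by rw [hD]; ring
  -- combine
  have htm1 : 0 < t - 1 := by linarith
  have hdpos := denom_pos hlk ht1
  rw [gA, div_le_div_iff₀ htm1 hdpos]
  have key : (A - B) / 2 / D * (D * (t-1)) ≤ (A * t ^ (k-1) - B * t ^ (l-1)) * (t - 1) := by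
    have : (A - B) / 2 / D * (D * (t-1)) = (A - B) / 2 * (t - 1) := by
      field_simp
    rw [this]
    exact mul_le_mul_of_nonneg_right hnum htm1.le
  calc (A - B) / 2 / D * (t ^ k - t ^ l)
      ≤ (A - B) / 2 / D * (D * (t - 1)) := by
        apply mul_le_mul_of_nonneg_left hden (div_pos (div_pos (by linarith) two_pos) hDpos).le
    _ ≤ (A * t ^ (k-1) - B * t ^ (l-1)) * (t - 1) := key

end Gfacts2
section Gfacts3

variable {A B : ℝ} {k l : ℤ}

lemma log_sub_one_hasDerivAt {x : ℝ} (hx : 1 < x) :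
    HasDerivAt (fun t : ℝ => Real.log (t - 1)) (x - 1)⁻¹ x := by
  have h1 : HasDerivAt (fun t : ℝ => t - 1) 1 x := (hasDerivAt_id x).sub_const 1
  have h2 := (Real.hasDerivAt_log (by linarith : x - 1 ≠ 0)).comp x h1
  rw [mul_one] at h2
  exact h2

lemma G_tendsto_one (hl : 0 ≤ l) (hlk : l < k) (hA : 0 < A) (hBA : B < A) :
    Tendsto (GA A B k l) (nhdsWithin 1 (Set.Ioi 1)) atTop := by
  obtain ⟨c, hc, hcb⟩ := g_lower_one (A := A) (B := B) hl hlk hA hBA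
  set φ : ℝ → ℝ := fun t => GA A B k l t + c * Real.log (t - 1) with hφ
  have hmono : AntitoneOn φ (Set.Ioc 1 2) := by
    apply antitoneOn_of_deriv_nonpos (convex_Ioc 1 2)
    · apply ContinuousOn.add
      · exact (G_contOn hlk).mono Set.Ioc_subset_Ioi_self
      · apply ContinuousOn.mul continuousOn_const
        intro t ht
        exact ((log_sub_one_hasDerivAt ht.1).continuousAt).continuousWithinAt
    · intro x hx
      rw [interior_Ioc] at hx
      exact ((G_hasDerivAt hlk hx.1).add
        (((log_sub_one_hasDerivAt hx.1)).const_mul c)).differentiableAt.differentiableWithinAt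
    · intro x hx
      rw [interior_Ioc] at hx
      have hd : HasDerivAt φ (-(gA A B k l x) + c * (x - 1)⁻¹) x :=
        (G_hasDerivAt hlk hx.1).add ((log_sub_one_hasDerivAt hx.1).const_mul c)
      rw [hd.deriv]
      have hb := hcb x ⟨hx.1, hx.2.le⟩
      have : c * (x - 1)⁻¹ = c / (x - 1) := by ring
      linarith [this ▸ hb]
  have hGlb : ∀ t ∈ Set.Ioc (1:ℝ) 2, GA A B k l 2 - c * Real.log (t - 1) ≤ GA A B k l t := by
    intro t ht
    have h2 : φ 2 ≤ φ t := hmono ht (by norm_num) ht.2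
    have : φ 2 = GA A B k l 2 := by
      have hlog : Real.log ((2:ℝ) - 1) = 0 := by norm_num
      simp [hφ, hlog]
    rw [this] at h2
    simp only [hφ] at h2
    linarith
  have hlim : Tendsto (fun t : ℝ => GA A B k l 2 - c * Real.log (t - 1))
      (nhdsWithin 1 (Set.Ioi 1)) atTop := by
    have h1 : Tendsto (fun t : ℝ => t - 1) (nhdsWithin 1 (Set.Ioi 1))
        (nhdsWithin 0 (Set.Ioi 0)) := by
      apply tendsto_nhdsWithin_of_tendsto_nhds_of_eventually_within
      · have hb : Tendsto (fun t : ℝ => t - 1) (nhdsWithin 1 (Set.Ioi 1)) (nhds ((1:ℝ) - 1)) :=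
          ((continuous_id.sub continuous_const).tendsto (1:ℝ)).mono_left nhdsWithin_le_nhds
        simpa using hb
      · filter_upwards [self_mem_nhdsWithin] with t ht
        simpa using (show (1:ℝ) < t from ht)
    have h2 : Tendsto (fun t : ℝ => Real.log (t - 1)) (nhdsWithin 1 (Set.Ioi 1)) atBot :=
      Real.tendsto_log_nhdsGT_zero.comp h1
    have h3 : Tendsto (fun t : ℝ => c * Real.log (t - 1)) (nhdsWithin 1 (Set.Ioi 1)) atBot :=
      h2.const_mul_atBot hc
    have h4 : Tendsto (fun t : ℝ => -(c * Real.log (t - 1))) (nhdsWithin 1 (Set.Ioi 1)) atTop :=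
      tendsto_neg_atBot_atTop.comp h3
    have h5 := tendsto_atTop_add_const_left _ (GA A B k l 2) h4
    apply h5.congr
    intro t; ring
  apply tendsto_atTop_mono' _ _ hlim
  filter_upwards [Ioc_mem_nhdsGT (by norm_num : (1:ℝ) < 2)] with t ht
  exact hGlb t ht

lemma g_lower_infty (hlk : l < k) (hA : 0 < A) (hB : 0 ≤ B) (hBA : B < A) :
    ∀ t : ℝ, 2 ≤ t → (A - B) / t ≤ gA A B k l t := by
  intro t ht
  have ht1 : (1:ℝ) < t := by linarith
  have ht0 : (0:ℝ) < t := by linarith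
  have hnum : (A - B) * t ^ (k-1) ≤ A * t ^ (k-1) - B * t ^ (l-1) := by
    have h1 : t ^ (l-1) ≤ t ^ (k-1) := zpow_le_zpow_right₀ ht1.le (by omega)
    nlinarith
  have hden : t ^ k - t ^ l ≤ t ^ k := by
    have : (0:ℝ) < t ^ l := zpow_pos ht0 _
    linarith
  have hdpos := denom_pos hlk ht1
  have hkpos : (0:ℝ) < t ^ k := zpow_pos ht0 _
  have hk1pos : (0:ℝ) < t ^ (k-1) := zpow_pos ht0 _
  have e1 : t ^ k = t ^ (k-1) * t := by
    rw [← zpow_add_one₀ ht0.ne']; ring_nf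
  rw [gA, div_le_div_iff₀ ht0 hdpos]
  calc (A - B) * (t ^ k - t ^ l) ≤ (A - B) * t ^ k := by
        apply mul_le_mul_of_nonneg_left hden (by linarith)
    _ = (A - B) * t ^ (k-1) * t := by rw [e1]; ring
    _ ≤ (A * t ^ (k-1) - B * t ^ (l-1)) * t := by
        apply mul_le_mul_of_nonneg_right hnum ht0.le

lemma G_tendsto_atBot (hlk : l < k) (hA : 0 < A) (hB : 0 ≤ B) (hBA : B < A) :
    Tendsto (GA A B k l) atTop atBot := by
  set c : ℝ := A - B with hc
  have hcpos : 0 < c := by simp [hc]; linarith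
  set φ : ℝ → ℝ := fun t => GA A B k l t + c * Real.log t with hφ
  have hmono : AntitoneOn φ (Set.Ici 2) := by
    apply antitoneOn_of_deriv_nonpos (convex_Ici 2)
    · apply ContinuousOn.add
      · apply (G_contOn hlk).mono
        intro x hx
        exact lt_of_lt_of_le one_lt_two (Set.mem_Ici.1 hx)
      · apply ContinuousOn.mul continuousOn_const
        intro t ht
        exact (Real.continuousAt_log (by simp at ht ⊢; linarith)).continuousWithinAt
    · intro x hx
      rw [interior_Ici] at hx
      have hx1 : (1:ℝ) < x := lt_trans one_lt_two hx
      exact ((G_hasDerivAt hlk hx1).add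
        ((Real.hasDerivAt_log (by linarith)).const_mul c)).differentiableAt.differentiableWithinAt
    · intro x hx
      rw [interior_Ici] at hx
      have hx1 : (1:ℝ) < x := lt_trans one_lt_two hx
      have hd : HasDerivAt φ (-(gA A B k l x) + c * x⁻¹) x :=
        (G_hasDerivAt hlk hx1).add ((Real.hasDerivAt_log (by linarith)).const_mul c)
      rw [hd.deriv]
      have hb := g_lower_infty (A := A) (B := B) hlk hA hB hBA x hx.le
      have : c * x⁻¹ = c / x := by ring
      linarith [this ▸ hb]
  have hGub : ∀ t : ℝ, 2 ≤ t → GA A B k l t ≤ φ 2 - c * Real.log t := by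
    intro t ht
    have h2 : φ t ≤ φ 2 := hmono (by norm_num) ht ht
    simp only [hφ] at h2 ⊢
    linarith
  have hlim : Tendsto (fun t : ℝ => φ 2 - c * Real.log t) atTop atBot := by
    have h1 : Tendsto (fun t : ℝ => c * Real.log t) atTop atTop :=
      Real.tendsto_log_atTop.const_mul_atTop hcpos
    have h2 : Tendsto (fun t : ℝ => -(c * Real.log t)) atTop atBot :=
      tendsto_neg_atTop_atBot.comp h1
    have h3 := tendsto_atBot_add_const_left _ (φ 2) h2
    apply h3.congr
    intro t; ring
  apply tendsto_atBot_mono' _ _ hlim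
  filter_upwards [eventually_ge_atTop (2:ℝ)] with t ht
  exact hGub t ht

lemma G_surj (hl : 0 ≤ l) (hlk : l < k) (hA : 0 < A) (hB : 0 ≤ B) (hBA : B < A) :
    ∀ y : ℝ, ∃ t : ℝ, 1 < t ∧ GA A B k l t = y := by
  intro y
  have h1 : ∀ᶠ t in nhdsWithin 1 (Set.Ioi 1), y < GA A B k l t :=
    (G_tendsto_one hl hlk hA hBA).eventually (eventually_gt_atTop y)
  obtain ⟨t₁, ht₁y, ht₁⟩ := (h1.and self_mem_nhdsWithin).exists
  have h2 : ∀ᶠ t in atTop, GA A B k l t < y ∧ t₁ < t :=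
    ((G_tendsto_atBot hlk hA hB hBA).eventually (eventually_lt_atBot y)).and
      (eventually_gt_atTop t₁)
  obtain ⟨t₂, ht₂y, ht₁₂⟩ := h2.exists
  have ht₁1 : (1:ℝ) < t₁ := ht₁
  have hsub : Set.Icc t₁ t₂ ⊆ Set.Ioi 1 := fun x hx => lt_of_lt_of_le ht₁1 hx.1
  have hcont : ContinuousOn (GA A B k l) (Set.Icc t₁ t₂) := (G_contOn hlk).mono hsub
  have := intermediate_value_Icc' ht₁₂.le hcont
  have hy : y ∈ Set.Icc (GA A B k l t₂) (GA A B k l t₁) := ⟨ht₂y.le, ht₁y.le⟩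
  obtain ⟨t, htmem, htval⟩ := this hy
  exact ⟨t, hsub htmem, htval⟩

end Gfacts3
section Psi

variable {A B : ℝ} {k l : ℤ} {ψ : ℝ → ℝ}

lemma exists_c0 (hlk : l < k) (hA : 0 < A) (hBA : B < A) :
    ∃ c₀ : ℝ, 0 < c₀ ∧ c₀ < 1 ∧ ∀ t : ℝ, c₀ < t → t ≤ 1 → 0 < A * t ^ (k-l) - B := by
  set f : ℝ → ℝ := fun t => A * t ^ (k-l) - B with hf
  have hc : ContinuousAt f 1 :=
    (continuousAt_const.mul (continuousAt_zpow₀ 1 (k-l) (Or.inl one_ne_zero))).sub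
      continuousAt_const
  have hf1 : 0 < f 1 := by simp [hf]; linarith
  have hnb : f ⁻¹' Set.Ioi 0 ∈ nhds (1:ℝ) := hc (isOpen_Ioi.mem_nhds hf1)
  obtain ⟨ε, hε, hball⟩ := Metric.mem_nhds_iff.1 hnb
  refine ⟨max (1 - ε/2) (1/2), lt_max_of_lt_right (by norm_num), ?_, ?_⟩
  · apply max_lt (by linarith) (by norm_num)
  · intro t ht1 ht2
    have h1 : 1 - ε/2 < t := lt_of_le_of_lt (le_max_left _ _) ht1
    have : t ∈ Metric.ball (1:ℝ) ε := by
      rw [Metric.mem_ball, Real.dist_eq, abs_sub_lt_iff]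
      constructor <;> linarith
    exact hball this

lemma psi_deriv_neg (hlk : l < k)
    (hode : ∀ s : ℝ, 1 < s →
      deriv ψ s * (s * (A * ψ s ^ (k-1) - B * ψ s ^ (l-1))) = ψ s ^ l - ψ s ^ k)
    (hA : 0 < A) (hB : 0 ≤ B) (hBA : B < A)
    {s : ℝ} (hs : 1 < s) (hψ : 1 < ψ s) : deriv ψ s < 0 := by
  set p := ψ s with hp
  have h1 : p ^ (l-1) ≤ p ^ (k-1) := zpow_le_zpow_right₀ hψ.le (by omega)
  have h2 : (0:ℝ) < p ^ (l-1) := zpow_pos (by linarith) _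
  have hD : 0 < A * p ^ (k-1) - B * p ^ (l-1) := by nlinarith
  have hrhs : p ^ l - p ^ k < 0 := sub_neg.2 (zpow_lt_zpow_right₀ hψ hlk)
  have h := hode s hs
  have hsD : 0 < s * (A * p ^ (k-1) - B * p ^ (l-1)) := mul_pos (by linarith) hD
  by_contra hcon
  push_neg at hcon
  nlinarith [mul_nonneg hcon hsD.le]

lemma psi_deriv_pos (hl : 0 ≤ l) (hlk : l < k)
    (hode : ∀ s : ℝ, 1 < s →
      deriv ψ s * (s * (A * ψ s ^ (k-1) - B * ψ s ^ (l-1))) = ψ s ^ l - ψ s ^ k)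
    {c₀ : ℝ} (hc₀pos : 0 < c₀)
    (hc₀ : ∀ t : ℝ, c₀ < t → t ≤ 1 → 0 < A * t ^ (k-l) - B)
    {s : ℝ} (hs : 1 < s) (hψ1 : c₀ < ψ s) (hψ2 : ψ s < 1) : 0 < deriv ψ s := by
  set p := ψ s with hp
  have hp0 : (0:ℝ) < p := lt_trans hc₀pos hψ1
  have e : p ^ (k-1) = p ^ (l-1) * p ^ (k-l) := by
    rw [← zpow_add₀ hp0.ne']
    congr 1
    omega
  have hsplit : A * p ^ (k-1) - B * p ^ (l-1) = p ^ (l-1) * (A * p ^ (k-l) - B) := by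
    rw [e]; ring
  have hD : 0 < A * p ^ (k-1) - B * p ^ (l-1) := by
    rw [hsplit]
    exact mul_pos (zpow_pos hp0 _) (hc₀ p hψ1 hψ2.le)
  have hrhs : 0 < p ^ l - p ^ k :=
    sub_pos.2 (zpow_lt_zpow_right_of_lt_one₀ hp0 hψ2 hlk)
  have h := hode s hs
  have hsD : 0 < s * (A * p ^ (k-1) - B * p ^ (l-1)) := mul_pos (by linarith) hD
  by_contra hcon
  push_neg at hcon
  nlinarith [mul_nonpos_of_nonpos_of_nonneg hcon hsD.le]

end Psi
section Psi2

variable {A B : ℝ} {k l : ℤ} {ψ : ℝ → ℝ}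

lemma psi_stay_one (hl : 0 ≤ l) (hlk : l < k) (hA : 0 < A) (hB : 0 ≤ B) (hBA : B < A)
    (hcont : ContinuousOn ψ (Set.Ici 1))
    (hode : ∀ s : ℝ, 1 < s →
      deriv ψ s * (s * (A * ψ s ^ (k-1) - B * ψ s ^ (l-1))) = ψ s ^ l - ψ s ^ k)
    {s0 r : ℝ} (hs0 : 1 ≤ s0) (hs0r : s0 ≤ r) (hψs0 : ψ s0 = 1) : ψ r = 1 := by
  by_contra hne
  have hsr : s0 < r := lt_of_le_of_ne hs0r (by rintro rfl; exact hne hψs0)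
  have hcIcc : ContinuousOn ψ (Set.Icc s0 r) :=
    hcont.mono (fun x hx => le_trans hs0 hx.1)
  set E : Set ℝ := Set.Icc s0 r ∩ ψ ⁻¹' {1} with hE
  have hEclosed : IsClosed E :=
    hcIcc.preimage_isClosed_of_isClosed isClosed_Icc isClosed_singleton
  have hEne : E.Nonempty := ⟨s0, ⟨le_rfl, hs0r⟩, hψs0⟩
  have hEbdd : BddAbove E := ⟨r, fun x hx => hx.1.2⟩
  set s₁ : ℝ := sSup E with hs₁def
  have hs₁E : s₁ ∈ E := hEclosed.csSup_mem hEne hEbdd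
  have hψs₁ : ψ s₁ = 1 := hs₁E.2
  have hs₁1 : 1 ≤ s₁ := le_trans hs0 hs₁E.1.1
  have hs₁r : s₁ ≤ r := hs₁E.1.2
  have hs₁lt : s₁ < r := lt_of_le_of_ne hs₁r (fun heq => hne (heq ▸ hψs₁))
  have hIccsub : Set.Icc s₁ r ⊆ Set.Icc s0 r := Set.Icc_subset_Icc hs₁E.1.1 le_rfl
  have hcIcc₁ : ContinuousOn ψ (Set.Icc s₁ r) := hcIcc.mono hIccsub
  have hnotouch : ∀ s ∈ Set.Ioc s₁ r, ψ s ≠ 1 := by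
    intro s hs h1
    have hsE : s ∈ E := ⟨⟨le_trans hs₁E.1.1 hs.1.le, hs.2⟩, h1⟩
    exact absurd (le_csSup hEbdd hsE) (not_le.2 hs.1)
  rcases lt_or_gt_of_ne hne with hlt | hgt
  · -- case ψ r < 1
    have hbelow : ∀ s ∈ Set.Ioc s₁ r, ψ s < 1 := by
      intro s hs
      rcases lt_or_gt_of_ne (hnotouch s hs) with h | h
      · exact h
      · exfalso
        rcases eq_or_lt_of_le hs.2 with heq | hsr2
        · rw [heq] at h; exact absurd h (not_lt.2 hlt.le)
        · have hIcc2 : ContinuousOn ψ (Set.Icc s r) :=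
            hcIcc₁.mono (Set.Icc_subset_Icc hs.1.le le_rfl)
          have h1mem : (1:ℝ) ∈ Set.Ioo (ψ r) (ψ s) := ⟨hlt, h⟩
          obtain ⟨c, hc, hc1⟩ := intermediate_value_Ioo' hsr2.le hIcc2 h1mem
          exact hnotouch c ⟨lt_trans hs.1 hc.1, hc.2.le⟩ hc1
    obtain ⟨c₀, hc₀pos, hc₀1, hc₀⟩ := exists_c0 (A := A) (B := B) hlk hA hBA
    set T : Set ℝ := Set.Icc s₁ r ∩ ψ ⁻¹' (Set.Iic c₀) with hT
    by_cases hTne : T.Nonempty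
    · have hTclosed : IsClosed T :=
        hcIcc₁.preimage_isClosed_of_isClosed isClosed_Icc isClosed_Iic
      have hTbdd : BddBelow T := ⟨s₁, fun x hx => hx.1.1⟩
      set v : ℝ := sInf T with hvdef
      have hvT : v ∈ T := hTclosed.csInf_mem hTne hTbdd
      have hψv : ψ v ≤ c₀ := hvT.2
      have hs₁v : s₁ < v := by
        rcases eq_or_lt_of_le hvT.1.1 with heq | h
        · exfalso
          rw [← heq] at hψv
          rw [hψs₁] at hψv
          linarith
        · exact h
      have hmid : ∀ x ∈ Set.Ioo s₁ v, c₀ < ψ x ∧ ψ x < 1 := by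
        intro x hx
        constructor
        · by_contra hcon
          push_neg at hcon
          have hxT : x ∈ T := ⟨⟨hx.1.le, le_trans hx.2.le hvT.1.2⟩, hcon⟩
          exact absurd (csInf_le hTbdd hxT) (not_le.2 hx.2)
        · exact hbelow x ⟨hx.1, le_trans hx.2.le hvT.1.2⟩
      have hmono : StrictMonoOn ψ (Set.Icc s₁ v) := by
        apply strictMonoOn_of_deriv_pos (convex_Icc s₁ v)
          (hcIcc₁.mono (Set.Icc_subset_Icc le_rfl hvT.1.2))
        intro x hx
        rw [interior_Icc] at hx
        have hx1 : 1 < x := lt_of_le_of_lt hs₁1 hx.1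
        exact psi_deriv_pos hl hlk hode hc₀pos hc₀ hx1 (hmid x hx).1 (hmid x hx).2
      have := hmono ⟨le_rfl, hs₁v.le⟩ ⟨hs₁v.le, le_rfl⟩ hs₁v
      rw [hψs₁] at this
      linarith
    · have hmono : StrictMonoOn ψ (Set.Icc s₁ r) := by
        apply strictMonoOn_of_deriv_pos (convex_Icc s₁ r) hcIcc₁
        intro x hx
        rw [interior_Icc] at hx
        have hx1 : 1 < x := lt_of_le_of_lt hs₁1 hx.1
        have hxgt : c₀ < ψ x := by
          by_contra hcon
          push_neg at hcon
          exact hTne ⟨x, ⟨hx.1.le, hx.2.le⟩, hcon⟩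
        exact psi_deriv_pos hl hlk hode hc₀pos hc₀ hx1 hxgt
          (hbelow x ⟨hx.1, hx.2.le⟩)
      have := hmono ⟨le_rfl, hs₁r⟩ ⟨hs₁r, le_rfl⟩ hs₁lt
      rw [hψs₁] at this
      linarith
  · -- case ψ r > 1
    have habove : ∀ s ∈ Set.Ioc s₁ r, 1 < ψ s := by
      intro s hs
      rcases lt_or_gt_of_ne (hnotouch s hs) with h | h
      · exfalso
        rcases eq_or_lt_of_le hs.2 with heq | hsr2
        · rw [heq] at h; exact absurd h (not_lt.2 hgt.le)
        · have hIcc2 : ContinuousOn ψ (Set.Icc s r) :=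
            hcIcc₁.mono (Set.Icc_subset_Icc hs.1.le le_rfl)
          have h1mem : (1:ℝ) ∈ Set.Ioo (ψ s) (ψ r) := ⟨h, hgt⟩
          obtain ⟨c, hc, hc1⟩ := intermediate_value_Ioo hsr2.le hIcc2 h1mem
          exact hnotouch c ⟨lt_trans hs.1 hc.1, hc.2.le⟩ hc1
      · exact h
    have hanti : StrictAntiOn ψ (Set.Icc s₁ r) := by
      apply strictAntiOn_of_deriv_neg (convex_Icc s₁ r) hcIcc₁
      intro x hx
      rw [interior_Icc] at hx
      have hx1 : 1 < x := lt_of_le_of_lt hs₁1 hx.1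
      exact psi_deriv_neg hlk hode hA hB hBA hx1 (habove x ⟨hx.1, hx.2.le⟩)
    have := hanti ⟨le_rfl, hs₁r⟩ ⟨hs₁r, le_rfl⟩ hs₁lt
    rw [hψs₁] at this
    linarith

lemma psi_ge_one (hl : 0 ≤ l) (hlk : l < k) (hA : 0 < A) (hB : 0 ≤ B) (hBA : B < A)
    (hcont : ContinuousOn ψ (Set.Ici 1))
    (hode : ∀ s : ℝ, 1 < s →
      deriv ψ s * (s * (A * ψ s ^ (k-1) - B * ψ s ^ (l-1))) = ψ s ^ l - ψ s ^ k)
    (hβ : 1 ≤ ψ 1) {r : ℝ} (hr : 1 ≤ r) : 1 ≤ ψ r := by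
  by_contra hcon
  push_neg at hcon
  have hr1 : 1 < r := by
    rcases eq_or_lt_of_le hr with rfl | h
    · linarith
    · exact h
  -- find a touch point
  have hcIcc : ContinuousOn ψ (Set.Icc 1 r) := hcont.mono (fun x hx => hx.1)
  have h1mem : (1:ℝ) ∈ Set.Icc (ψ r) (ψ 1) := ⟨hcon.le, hβ⟩
  obtain ⟨s0, hs0, hψs0⟩ := intermediate_value_Icc' hr hcIcc h1mem
  have := psi_stay_one hl hlk hA hB hBA hcont hode hs0.1 hs0.2 hψs0
  linarith

end Psi2
section Psi3

variable {A B : ℝ} {k l : ℤ} {ψ : ℝ → ℝ}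

lemma const_of_deriv_zero {S : Set ℝ} (hS : Convex ℝ S) (hSo : IsOpen S) {f : ℝ → ℝ}
    (hf : ∀ x ∈ S, HasDerivAt f 0 x) : ∀ x ∈ S, ∀ y ∈ S, f x = f y := by
  have hint : interior S = S := hSo.interior_eq
  have hc : ContinuousOn f S := fun x hx => (hf x hx).continuousAt.continuousWithinAt
  have hdiff : DifferentiableOn ℝ f (interior S) := by
    rw [hint]
    exact fun x hx => (hf x hx).differentiableAt.differentiableWithinAt
  have hmono : MonotoneOn f S := by
    apply monotoneOn_of_deriv_nonneg hS hc hdiff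
    intro x hx
    rw [hint] at hx
    rw [(hf x hx).deriv]
  have hanti : AntitoneOn f S := by
    apply antitoneOn_of_deriv_nonpos hS hc hdiff
    intro x hx
    rw [hint] at hx
    rw [(hf x hx).deriv]
  intro x hx y hy
  rcases le_total x y with h | h
  · exact le_antisymm (hmono hx hy h) (hanti hx hy h)
  · exact (le_antisymm (hmono hy hx h) (hanti hy hx h)).symm

lemma phi_hasDerivAt (hlk : l < k) (hA : 0 < A) (hB : 0 ≤ B) (hBA : B < A)
    (hd : ∀ s : ℝ, 1 < s → HasDerivAt ψ (deriv ψ s) s)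
    (hode : ∀ s : ℝ, 1 < s →
      deriv ψ s * (s * (A * ψ s ^ (k-1) - B * ψ s ^ (l-1))) = ψ s ^ l - ψ s ^ k)
    {s : ℝ} (hs : 1 < s) (hψ : 1 < ψ s) :
    HasDerivAt (fun t => GA A B k l (ψ t) - Real.log t) 0 s := by
  have hG := G_hasDerivAt (A := A) (B := B) hlk hψ
  have hcomp : HasDerivAt (fun t => GA A B k l (ψ t))
      (-(gA A B k l (ψ s)) * deriv ψ s) s := hG.comp s (hd s hs)
  have hlog : HasDerivAt Real.log s⁻¹ s := Real.hasDerivAt_log (by linarith)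
  have h := hcomp.sub hlog
  have key : -(gA A B k l (ψ s)) * deriv ψ s - s⁻¹ = 0 := by
    have hden : (0:ℝ) < ψ s ^ k - ψ s ^ l := denom_pos hlk hψ
    have hodes := hode s hs
    have hs0 : (s:ℝ) ≠ 0 := by linarith
    rw [gA]
    field_simp
    linear_combination -hodes
  rw [key] at h
  exact h

lemma psi_gt_one (hl : 0 ≤ l) (hlk : l < k) (hA : 0 < A) (hB : 0 ≤ B) (hBA : B < A)
    (hcont : ContinuousOn ψ (Set.Ici 1))
    (hd : ∀ s : ℝ, 1 < s → HasDerivAt ψ (deriv ψ s) s)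
    (hode : ∀ s : ℝ, 1 < s →
      deriv ψ s * (s * (A * ψ s ^ (k-1) - B * ψ s ^ (l-1))) = ψ s ^ l - ψ s ^ k)
    (hβ : 1 < ψ 1) {r : ℝ} (hr : 1 ≤ r) : 1 < ψ r := by
  rcases eq_or_lt_of_le hr with heq | hr1
  · rw [← heq]; exact hβ
  by_contra hcon
  push_neg at hcon
  have hψr : ψ r = 1 :=
    le_antisymm hcon (psi_ge_one hl hlk hA hB hBA hcont hode hβ.le hr)
  have hcIcc : ContinuousOn ψ (Set.Icc 1 r) := hcont.mono (fun x hx => hx.1)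
  have hEclosed : IsClosed (Set.Icc 1 r ∩ ψ ⁻¹' {1}) :=
    hcIcc.preimage_isClosed_of_isClosed isClosed_Icc isClosed_singleton
  have hEne : (Set.Icc 1 r ∩ ψ ⁻¹' {1}).Nonempty := ⟨r, ⟨hr, le_rfl⟩, hψr⟩
  have hEbdd : BddBelow (Set.Icc 1 r ∩ ψ ⁻¹' {1}) := ⟨1, fun x hx => hx.1.1⟩
  have hs₁E : sInf (Set.Icc 1 r ∩ ψ ⁻¹' {1}) ∈ Set.Icc 1 r ∩ ψ ⁻¹' {1} :=
    hEclosed.csInf_mem hEne hEbdd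
  set s₁ : ℝ := sInf (Set.Icc 1 r ∩ ψ ⁻¹' {1}) with hs₁def
  have hψs₁ : ψ s₁ = 1 := hs₁E.2
  have hs₁gt : 1 < s₁ := by
    rcases eq_or_lt_of_le hs₁E.1.1 with heq | h
    · exfalso; rw [← heq] at hψs₁; linarith
    · exact h
  have hgtmid : ∀ x ∈ Set.Ioo 1 s₁, 1 < ψ x := by
    intro x hx
    have hge : 1 ≤ ψ x := psi_ge_one hl hlk hA hB hBA hcont hode hβ.le hx.1.le
    rcases eq_or_lt_of_le hge with heq | h
    · exfalso
      have hxE : x ∈ Set.Icc 1 r ∩ ψ ⁻¹' {1} :=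
        ⟨⟨hx.1.le, le_trans hx.2.le hs₁E.1.2⟩, heq.symm⟩
      exact absurd (csInf_le hEbdd hxE) (not_le.2 hx.2)
    · exact h
  -- Φ is constant on Ioo 1 s₁
  have hphiconst := const_of_deriv_zero (convex_Ioo (1:ℝ) s₁) isOpen_Ioo
    (f := fun t => GA A B k l (ψ t) - Real.log t)
    (fun x hx => phi_hasDerivAt hlk hA hB hBA hd hode hx.1 (hgtmid x hx))
  set mid : ℝ := (1 + s₁) / 2 with hmid
  have hmidmem : mid ∈ Set.Ioo 1 s₁ := ⟨by simp [hmid]; linarith, by simp [hmid]; linarith⟩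
  set C : ℝ := GA A B k l (ψ mid) - Real.log mid with hC
  have hconst : ∀ x ∈ Set.Ioo 1 s₁, GA A B k l (ψ x) = C + Real.log x := by
    intro x hx
    have h2 := hphiconst x hx mid hmidmem
    change GA A B k l (ψ x) - Real.log x = GA A B k l (ψ mid) - Real.log mid at h2
    rw [hC]
    linarith
  -- limit from the left at s₁
  have hψcont : ContinuousAt ψ s₁ := (hd s₁ hs₁gt).differentiableAt.continuousAt
  have hIoomem : Set.Ioo 1 s₁ ∈ nhdsWithin s₁ (Set.Iio s₁) := by
    apply mem_nhdsWithin.2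
    exact ⟨Set.Ioi 1, isOpen_Ioi, hs₁gt, by
      intro x hx
      exact ⟨hx.1, hx.2⟩⟩
  have htend1 : Tendsto ψ (nhdsWithin s₁ (Set.Iio s₁)) (nhds 1) := by
    have := hψcont.tendsto.mono_left (nhdsWithin_le_nhds (s := Set.Iio s₁))
    rwa [hψs₁] at this
  have htend : Tendsto ψ (nhdsWithin s₁ (Set.Iio s₁)) (nhdsWithin 1 (Set.Ioi 1)) := by
    apply tendsto_nhdsWithin_of_tendsto_nhds_of_eventually_within _ htend1
    filter_upwards [hIoomem] with x hx
    exact hgtmid x hx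
  have hGtend : Tendsto (fun s => GA A B k l (ψ s)) (nhdsWithin s₁ (Set.Iio s₁)) atTop :=
    (G_tendsto_one hl hlk hA hBA).comp htend
  have hLtend : Tendsto (fun s : ℝ => C + Real.log s) (nhdsWithin s₁ (Set.Iio s₁))
      (nhds (C + Real.log s₁)) := by
    apply Tendsto.const_add
    exact ((Real.continuousAt_log (by linarith)).tendsto).mono_left nhdsWithin_le_nhds
  have heq : (fun s => GA A B k l (ψ s)) =ᶠ[nhdsWithin s₁ (Set.Iio s₁)]
      (fun s : ℝ => C + Real.log s) := by
    filter_upwards [hIoomem] with x hx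
    exact hconst x hx
  have : Tendsto (fun s => GA A B k l (ψ s)) (nhdsWithin s₁ (Set.Iio s₁))
      (nhds (C + Real.log s₁)) := hLtend.congr' heq.symm
  exact not_tendsto_atTop_of_tendsto_nhds this hGtend

lemma psi_conserved (hl : 0 ≤ l) (hlk : l < k) (hA : 0 < A) (hB : 0 ≤ B) (hBA : B < A)
    (hcont : ContinuousOn ψ (Set.Ici 1))
    (hd : ∀ s : ℝ, 1 < s → HasDerivAt ψ (deriv ψ s) s)
    (hode : ∀ s : ℝ, 1 < s →
      deriv ψ s * (s * (A * ψ s ^ (k-1) - B * ψ s ^ (l-1))) = ψ s ^ l - ψ s ^ k)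
    (hβ : 1 < ψ 1) {r : ℝ} (hr : 1 < r) :
    GA A B k l (ψ r) = GA A B k l (ψ 1) + Real.log r := by
  have hgt : ∀ s : ℝ, 1 ≤ s → 1 < ψ s :=
    fun s hs => psi_gt_one hl hlk hA hB hBA hcont hd hode hβ hs
  have hphiconst := const_of_deriv_zero (convex_Ioi (1:ℝ)) isOpen_Ioi
    (f := fun t => GA A B k l (ψ t) - Real.log t)
    (fun x hx => phi_hasDerivAt hlk hA hB hBA hd hode hx (hgt x (le_of_lt hx)))
  -- limit from the right at 1
  have htendψ : Tendsto ψ (nhdsWithin 1 (Set.Ioi 1)) (nhds (ψ 1)) := by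
    have h1 : ContinuousWithinAt ψ (Set.Ici 1) 1 := hcont 1 Set.self_mem_Ici
    exact h1.tendsto.mono_left (nhdsWithin_mono 1 Set.Ioi_subset_Ici_self)
  have hGcont : ContinuousAt (GA A B k l) (ψ 1) :=
    (G_hasDerivAt (A := A) (B := B) hlk hβ).differentiableAt.continuousAt
  have htendG : Tendsto (fun s => GA A B k l (ψ s)) (nhdsWithin 1 (Set.Ioi 1))
      (nhds (GA A B k l (ψ 1))) := hGcont.tendsto.comp htendψ
  have htendlog : Tendsto (fun s : ℝ => Real.log s) (nhdsWithin 1 (Set.Ioi 1)) (nhds 0) := by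
    have := (Real.continuousAt_log (one_ne_zero)).tendsto.mono_left
      (nhdsWithin_le_nhds (s := Set.Ioi (1:ℝ)))
    rwa [Real.log_one] at this
  have htendΦ : Tendsto (fun s => GA A B k l (ψ s) - Real.log s)
      (nhdsWithin 1 (Set.Ioi 1)) (nhds (GA A B k l (ψ 1))) := by
    have := htendG.sub htendlog
    rwa [sub_zero] at this
  have hconst : (fun s => GA A B k l (ψ s) - Real.log s) =ᶠ[nhdsWithin 1 (Set.Ioi 1)]
      (fun _ => GA A B k l (ψ r) - Real.log r) := by
    filter_upwards [self_mem_nhdsWithin] with x hx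
    have h2 := hphiconst x hx r hr
    change GA A B k l (ψ x) - Real.log x = GA A B k l (ψ r) - Real.log r at h2
    exact h2
  have htendC : Tendsto (fun s => GA A B k l (ψ s) - Real.log s)
      (nhdsWithin 1 (Set.Ioi 1)) (nhds (GA A B k l (ψ r) - Real.log r)) := by
    rw [Filter.tendsto_congr' hconst]
    exact tendsto_const_nhds
  have := tendsto_nhds_unique htendΦ htendC
  linarith

end Psi3
/-- **Lemma 3.1, part (ii).** For any family `Ψ` such that for each `β ≥ 1` the
slice `r ↦ Ψ r β` solves the initial value problem (3.1), the map
`β ↦ Ψ r β` is continuous and strictly increasing on `[1,∞)`, and tends to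
`+∞` as `β → +∞`, for every fixed `r ≥ 1`. -/
theorem ode_solution_monotone_in_beta
    (n : ℕ) (hn : 3 ≤ n) (k l : ℤ) (hl : 0 ≤ l) (hlk : l < k) (hkn : k ≤ (n : ℤ))
    (a : Fin n → ℝ) (ha : ∀ i, 0 < a i)
    (hσ : esymm n k a = esymm n l a) (hm : 2 < mkl n k l a)
    (Ψ : ℝ → ℝ → ℝ)
    (hΨ : ∀ β : ℝ, 1 ≤ β → SolvesODE n k l a β (fun r => Ψ r β)) :
    ∀ r : ℝ, 1 ≤ r →
      ContinuousOn (fun β => Ψ r β) (Set.Ici 1) ∧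
      StrictMonoOn (fun β => Ψ r β) (Set.Ici 1) ∧
      Filter.Tendsto (fun β => Ψ r β) Filter.atTop Filter.atTop := by
  have h0n : 0 < n := by omega
  have hA : 0 < xiSup n k a := xiSup_pos ha h0n (by omega) hkn
  have hB : 0 ≤ xiInf n l a := xiInf_nonneg ha h0n hl (by omega)
  have hABpos := xiSup_sub_xiInf_pos hlk hm
  have hBA : xiInf n l a < xiSup n k a := by linarith
  have hinit : ∀ β : ℝ, 1 ≤ β → Ψ 1 β = β := fun β hβ => (hΨ β hβ).2.1
  -- core facts for each β
  have hcore : ∀ β : ℝ, 1 ≤ β →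
      ContinuousOn (fun s => Ψ s β) (Set.Ici 1) ∧
      (∀ s : ℝ, 1 < s → HasDerivAt (fun s => Ψ s β) (deriv (fun s => Ψ s β) s) s) ∧
      (∀ s : ℝ, 1 < s → deriv (fun s => Ψ s β) s *
          (s * (xiSup n k a * Ψ s β ^ (k-1) - xiInf n l a * Ψ s β ^ (l-1)))
        = Ψ s β ^ l - Ψ s β ^ k) := by
    intro β hβ
    obtain ⟨hsm, hin, hod⟩ := hΨ β hβ
    refine ⟨hsm.continuousOn, ?_, ?_⟩
    · intro s hs
      have hmem : Set.Ici (1:ℝ) ∈ nhds s := Ici_mem_nhds hs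
      exact (((hsm.differentiableOn (by simp)) s (le_of_lt hs)).differentiableAt hmem).hasDerivAt
    · intro s hs
      have h := hod s hs
      linear_combination h
  intro r hr
  rcases eq_or_lt_of_le hr with heq | hr1
  · -- r = 1
    have hid : ∀ β ∈ Set.Ici (1:ℝ), Ψ r β = β := by
      intro β hβ
      rw [← heq]
      exact hinit β hβ
    refine ⟨?_, ?_, ?_⟩
    · exact continuousOn_id.congr hid
    · intro x hx y hy hxy
      simp only [hid x hx, hid y hy]
      exact hxy
    · apply tendsto_id.congr'
      filter_upwards [eventually_ge_atTop (1:ℝ)] with β hβ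
      exact (hid β hβ).symm
  · -- r > 1
    have h1f : Ψ r 1 = 1 := by
      obtain ⟨hc, hd, ho⟩ := hcore 1 le_rfl
      exact psi_stay_one hl hlk hA hB hBA hc ho le_rfl hr (hinit 1 le_rfl)
    have hfge : ∀ β : ℝ, 1 ≤ β → 1 ≤ Ψ r β := by
      intro β hβ
      obtain ⟨hc, hd, ho⟩ := hcore β hβ
      exact psi_ge_one hl hlk hA hB hBA hc ho (by rw [hinit β hβ]; exact hβ) hr
    have hgt : ∀ β : ℝ, 1 < β → 1 < Ψ r β := by
      intro β hβ
      obtain ⟨hc, hd, ho⟩ := hcore β hβ.le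
      exact psi_gt_one hl hlk hA hB hBA hc hd ho (by rw [hinit β hβ.le]; exact hβ) hr
    have hcons : ∀ β : ℝ, 1 < β →
        GA (xiSup n k a) (xiInf n l a) k l (Ψ r β)
          = GA (xiSup n k a) (xiInf n l a) k l β + Real.log r := by
      intro β hβ
      obtain ⟨hc, hd, ho⟩ := hcore β hβ.le
      have := psi_conserved hl hlk hA hB hBA hc hd ho
        (by rw [hinit β hβ.le]; exact hβ) hr1
      rwa [hinit β hβ.le] at this
    have hGanti := G_anti (A := xiSup n k a) (B := xiInf n l a) (k := k) (l := l) hlk hA hBA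
    have hmono : StrictMonoOn (fun β => Ψ r β) (Set.Ici 1) := by
      intro x hx y hy hxy
      simp only
      rcases eq_or_lt_of_le (Set.mem_Ici.1 hx) with heqx | hx1
      · rw [← heqx, h1f]
        exact hgt y (by rw [← heqx] at hxy; exact hxy)
      · have hfx := hgt x hx1
        have hfy := hgt y (lt_trans hx1 hxy)
        have e1 := hcons x hx1
        have e2 := hcons y (lt_trans hx1 hxy)
        have hGxy : GA (xiSup n k a) (xiInf n l a) k l y
            < GA (xiSup n k a) (xiInf n l a) k l x := hGanti hx1 (lt_trans hx1 hxy) hxy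
        have hGf : GA (xiSup n k a) (xiInf n l a) k l (Ψ r y)
            < GA (xiSup n k a) (xiInf n l a) k l (Ψ r x) := by linarith
        by_contra hcon
        push_neg at hcon
        rcases eq_or_lt_of_le hcon with heq2 | hlt2
        · rw [heq2] at hGf; linarith
        · exact absurd (hGanti hfy hfx hlt2) (by linarith)
    have hsurj : Set.SurjOn (fun β => Ψ r β) (Set.Ici 1) (Set.Ici 1) := by
      intro y hy
      rcases eq_or_lt_of_le (Set.mem_Ici.1 hy) with heqy | hy1
      · exact ⟨1, Set.self_mem_Ici, by simpa [h1f] using heqy⟩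
      · obtain ⟨β, hβ1, hβval⟩ := G_surj (A := xiSup n k a) (B := xiInf n l a)
          hl hlk hA hB hBA (GA (xiSup n k a) (xiInf n l a) k l y - Real.log r)
        have he : GA (xiSup n k a) (xiInf n l a) k l (Ψ r β)
            = GA (xiSup n k a) (xiInf n l a) k l y := by
          rw [hcons β hβ1, hβval]; ring
        have hinj := hGanti.injOn
        have : Ψ r β = y := hinj (hgt β hβ1) hy1 he
        exact ⟨β, hβ1.le, this⟩
    refine ⟨?_, hmono, ?_⟩
    · -- continuity
      intro β₀ hβ₀
      have hR : ContinuousWithinAt (fun β => Ψ r β) (Set.Ici β₀) β₀ := by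
        apply hmono.continuousWithinAt_right_of_surjOn
        · exact mem_of_superset self_mem_nhdsWithin (Set.Ici_subset_Ici.2 hβ₀)
        · intro y hy
          apply hsurj
          exact le_trans (hfge β₀ hβ₀) (le_of_lt hy)
      rcases eq_or_lt_of_le (Set.mem_Ici.1 hβ₀) with heqβ | hβ₀1
      · rw [← heqβ]
        rw [← heqβ] at hR
        exact hR
      · have hL : ContinuousWithinAt (fun β => Ψ r β) (Set.Iic β₀) β₀ := by
          apply hmono.continuousWithinAt_left_of_exists_between
          · apply mem_nhdsWithin.2
            exact ⟨Set.Ioi 1, isOpen_Ioi, hβ₀1, fun x hx => Set.mem_Ici.2 hx.1.le⟩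
          · intro b hb
            by_cases hb1 : b < 1
            · exact ⟨1, Set.self_mem_Ici, by
                simp only [h1f]
                exact ⟨hb1.le, by simpa [h1f] using hgt β₀ hβ₀1⟩⟩
            · push_neg at hb1
              obtain ⟨c, hc, hcval⟩ := hsurj (hb1 : b ∈ Set.Ici 1)
              change Ψ r c = b at hcval
              exact ⟨c, hc, by rw [hcval]; exact ⟨le_rfl, hb⟩⟩
        have := hL.union hR
        apply this.mono
        intro x _
        rcases le_total x β₀ with h | h
        · exact Or.inl h
        · exact Or.inr h
    · -- tendsto atTop
      rw [tendsto_atTop]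
      intro M
      set M' : ℝ := max M 2 with hM'
      have hM'1 : (1:ℝ) < M' := lt_of_lt_of_le one_lt_two (le_max_right _ _)
      have hev : ∀ᶠ β in atTop, GA (xiSup n k a) (xiInf n l a) k l β
          < GA (xiSup n k a) (xiInf n l a) k l M' - Real.log r :=
        (G_tendsto_atBot hlk hA hB hBA).eventually (eventually_lt_atBot _)
      filter_upwards [hev, eventually_ge_atTop (2:ℝ)] with β hβlt hβ2
      have hβ1 : (1:ℝ) < β := by linarith
      have e := hcons β hβ1
      have hGβ : GA (xiSup n k a) (xiInf n l a) k l (Ψ r β)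
          < GA (xiSup n k a) (xiInf n l a) k l M' := by linarith
      have hM'le : M' ≤ Ψ r β := by
        by_contra hcon
        push_neg at hcon
        have := hGanti (hgt β hβ1) hM'1 hcon
        linarith
      exact le_trans (le_max_left _ _) hM'le
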